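/- arXiv:1909.10471 — 8 statements merged into one kernel-verified Lean document; each statement's English description precedes it below -/
import Mathlib

section
/- In the (2,2;M=1,R=2/3) demand-private coded caching scheme of Table I with subpacketization 3, every user always recovers its demanded file: for every user i ∈ {0,1}, every pair of cache-randomness bits (r₀,r₁) ∈ {0,1}² and every demand pair (d₀,d₁) ∈ {0,1}², there exists a decoding function dec : V³ × V² → V³ (depending only on i, r_i and the transmission index σ(r,d), not on the files) such that for all files A,B ∈ V³, dec(Z_{i,r_i}(A,B), X_{σ(r,d)}(A,B)) = A if d_i = 0 and dec(Z_{i,r_i}(A,B), X_{σ(r,d)}(A,B)) = B if d_i = 1. -/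
/-- The two possible cache contents of user `i` in the scheme of Table I:
`cache22 i ρ A B` is the cache `Z_{iρ}` as a triple of elements of `V`. -/
def cache22 {V : Type*} [AddCommGroup V] (i : Fin 2) (ρ : ZMod 2)
    (A B : Fin 3 → V) : Fin 3 → V :=
  if i = 0 then
    if ρ = 0 then ![A 0 + A 1, B 0 + B 1, A 2 + B 1]
    else ![A 0 + A 1, B 0 + B 1, A 1 + B 2]
  else
    if ρ = 0 then ![A 0 + A 2, B 0 + B 2, A 1 + B 2]
    else ![A 0 + A 2, B 0 + B 2, A 2 + B 1]

/-- The four possible transmissions `X_t` of the scheme of Table I. -/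
def tx22 {V : Type*} [AddCommGroup V] (t : Fin 4) (A B : Fin 3 → V) : Fin 2 → V :=
  if t = 0 then ![A 0, B 0]
  else if t = 1 then ![A 1, B 1]
  else if t = 2 then ![A 2, B 2]
  else ![A 0 + A 1 + A 2, B 0 + B 1 + B 2]

/-- The transmission index `σ(r,d) = 2·(d₀ XOR r₀) + (d₁ XOR r₁)`
(XOR is addition in `ZMod 2`). -/
def sigma22 (r d : Fin 2 → ZMod 2) : Fin 4 :=
  ⟨2 * (d 0 + r 0).val + (d 1 + r 1).val, by
    have h0 := (d 0 + r 0).val_lt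
    have h1 := (d 1 + r 1).val_lt
    omega⟩

/-- The decoder of user `i` with randomness bit `ρ` on transmission index `t`. -/
def dec22 {V : Type*} [AddCommGroup V] (i : Fin 2) (ρ : ZMod 2) (t : Fin 4)
    (p : (Fin 3 → V) × (Fin 2 → V)) : Fin 3 → V :=
  let z := p.1
  let x := p.2
  if i = 0 then
    if ρ = 0 then
      if t = 0 then ![x 0, z 0 + x 0, z 2 + z 1 + x 1]
      else if t = 1 then ![z 0 + x 0, x 0, z 2 + x 1]
      else if t = 2 then ![z 1 + z 2 + x 0, z 2 + x 0, x 1]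
      else ![z 0 + z 1 + z 2 + x 0, z 0 + z 2 + x 0, z 1 + x 1]
    else
      if t = 0 then ![x 1, z 1 + x 1, z 0 + z 2 + x 0]
      else if t = 1 then ![z 1 + x 1, x 1, z 2 + x 0]
      else if t = 2 then ![z 0 + z 2 + x 1, z 2 + x 1, x 0]
      else ![z 0 + z 1 + z 2 + x 1, z 1 + z 2 + x 1, z 0 + x 0]
  else
    if ρ = 0 then
      if t = 0 then ![x 0, z 1 + z 2 + x 1, z 0 + x 0]
      else if t = 1 then ![z 1 + z 2 + x 0, x 1, z 2 + x 0]
      else if t = 2 then ![z 0 + x 0, z 2 + x 1, x 0]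
      else ![z 0 + z 1 + z 2 + x 0, z 1 + x 1, z 0 + z 2 + x 0]
    else
      if t = 0 then ![x 1, z 0 + z 2 + x 0, z 1 + x 1]
      else if t = 1 then ![z 0 + z 2 + x 1, x 0, z 2 + x 1]
      else if t = 2 then ![z 1 + x 1, z 2 + x 0, x 1]
      else ![z 0 + z 1 + z 2 + x 1, z 0 + x 0, z 1 + z 2 + x 1]

set_option maxHeartbeats 1000000 in
/-- Correctness of the `(2,2;M=1,R=2/3)` demand-private scheme of Table I with
subpacketization 3: every user always recovers its demanded file, using a decoder
depending only on its identity `i`, its cache-randomness bit `r i` and the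
transmission index `σ(r,d)` (demand `0` = file `A`, demand `1` = file `B`). -/
theorem table1_scheme_correct (V : Type*) [AddCommGroup V] [Module (ZMod 2) V] :
    ∃ dec : Fin 2 → ZMod 2 → Fin 4 → ((Fin 3 → V) × (Fin 2 → V) → (Fin 3 → V)),
      ∀ (i : Fin 2) (r d : Fin 2 → ZMod 2) (A B : Fin 3 → V),
        dec i (r i) (sigma22 r d)
            (cache22 i (r i) A B, tx22 (sigma22 r d) A B) =
          if d i = 0 then A else B := by
  have hx : ∀ x : V, x + x = 0 := fun x => by
    rw [← two_smul (ZMod 2) x, show (2 : ZMod 2) = 0 by decide, zero_smul]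
  have hz : ∀ x : V, (2 : ℤ) • x = 0 := fun x => by
    rw [two_zsmul]; exact hx x
  refine ⟨dec22, ?_⟩
  intro i r d A B
  have hbit : ∀ x : ZMod 2, x = 0 ∨ x = 1 := by decide
  have hI : ∀ j : Fin 2, j = 0 ∨ j = 1 := by decide
  have v0 : (0 : ZMod 2).val = 0 := rfl
  have v1 : (1 : ZMod 2).val = 1 := rfl
  have e11 : (1 : ZMod 2) + 1 = 0 := by decide
  rcases hI i with hi | hi <;> subst hi <;>
    rcases hbit (r 0) with h0 | h0 <;> rcases hbit (r 1) with h1 | h1 <;>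
    rcases hbit (d 0) with h2 | h2 <;> rcases hbit (d 1) with h3 | h3 <;>
    funext j <;> fin_cases j <;>
    simp +decide [sigma22, h0, h1, h2, h3, e11, v0, v1, dec22, cache22, tx22,
      Fin.ext_iff] <;>
    abel_nf <;> simp [hz]
end

section
/- (Duality of transmissions and caches for 2 users, 2 files.) Given a two-user, two-file private caching configuration with two cache options per user (as defined in the context, including the recovery table rec with its decoders, the labeling conditions rec(0,0,(d₀,d₁)) = d₀ and rec(1,0,(d₀,d₁)) = d₁, and the privacy condition rec(i,0,t) ≠ rec(i,1,t) for all i and t), the dual configuration obtained by interchanging caches and transmissions is a correct scheme: taking X(0,1) and X(1,0) as the two dual cache options of user 0, X(0,0) and X(1,1) as the two dual cache options of user 1, and the four caches Z(i,s) as the dual transmissions, for every choice of dual cache options (r'₀,r'₁) ∈ {0,1}² and every demand pair (d₀,d₁) ∈ {0,1}² there exist (i,s) ∈ {0,1}² and decoding functions dec₀, dec₁ : γ × β → α such that for all (a,b) ∈ α × α: dec₀ applied to (user 0's dual cache evaluated at (a,b), Z(i,s)(a,b)) equals a if d₀ = 0 and b if d₀ = 1, and dec₁ applied to (user 1's dual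 cache evaluated at (a,b), Z(i,s)(a,b)) equals a if d₁ = 0 and b if d₁ = 1. -/
/-- Duality of transmissions and caches for a two-user, two-file private caching
configuration with two cache options per user.

Data: files live in `α` (a file pair is `(a,b)`; demand `0` means `a`, demand `1`
means `b`); `Z i r : α × α → β` is the `r`-th cache option of user `i`;
`X (d₀,d₁) : α × α → γ` is the transmission used for demand pair `(d₀,d₁)` when
both users hold their option-0 caches; `rec i r t` records which file user `i`
recovers from transmission `X t` when holding cache option `r`.

Hypotheses: `hdec` (decodability according to the recovery table `rec`),
`hlabel0`/`hlabel1` (label consistency: `rec 0 0 (d₀,d₁) = d₀`,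
`rec 1 0 (d₀,d₁) = d₁`) and `hpriv` (privacy: `rec i 0 t ≠ rec i 1 t`).

Conclusion: the dual configuration — where `X (0,1)`, `X (1,0)` are the two dual
cache options of user 0, `X (0,0)`, `X (1,1)` are the two dual cache options of
user 1, and the four original caches `Z i s` serve as the dual transmissions —
is a correct scheme: for every choice of dual cache options `(r'₀, r'₁)` and
every demand pair `(d₀, d₁)` there is a dual transmission `Z i s` and decoders
recovering each user's demanded file. -/
theorem dual_of_private_scheme (α β γ : Type*)
    (Z : Fin 2 → Fin 2 → α × α → β)
    (X : Fin 2 × Fin 2 → α × α → γ)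
    (rec : Fin 2 → Fin 2 → Fin 2 × Fin 2 → Fin 2)
    (hdec : ∀ (i r : Fin 2) (t : Fin 2 × Fin 2), ∃ dec : β × γ → α,
      ∀ a b : α, dec (Z i r (a, b), X t (a, b)) = if rec i r t = 0 then a else b)
    (hlabel0 : ∀ t : Fin 2 × Fin 2, rec 0 0 t = t.1)
    (hlabel1 : ∀ t : Fin 2 × Fin 2, rec 1 0 t = t.2)
    (hpriv : ∀ (i : Fin 2) (t : Fin 2 × Fin 2), rec i 0 t ≠ rec i 1 t) :
    ∀ (r' : Fin 2 → Fin 2) (d : Fin 2 × Fin 2),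
      ∃ (i s : Fin 2) (dec0 dec1 : γ × β → α),
        ∀ a b : α,
          dec0 ((if r' 0 = 0 then X (0, 1) else X (1, 0)) (a, b), Z i s (a, b)) =
            (if d.1 = 0 then a else b) ∧
          dec1 ((if r' 1 = 0 then X (0, 0) else X (1, 1)) (a, b), Z i s (a, b)) =
            (if d.2 = 0 then a else b) := by
  intro r' d
  have flip : ∀ x y : Fin 2, x ≠ y → y = 1 - x := by decide
  have hrec : ∀ (i s : Fin 2) (t : Fin 2 × Fin 2),
      rec i s t = if s = 0 then (if i = 0 then t.1 else t.2)
        else 1 - (if i = 0 then t.1 else t.2) := by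
    have two : ∀ x : Fin 2, x = 0 ∨ x = 1 := by decide
    intro i s t
    rcases two i with hi | hi <;> rcases two s with hs | hs <;> subst hi <;> subst hs
    · simpa using hlabel0 t
    · simpa using (flip _ _ (hpriv 0 t)).trans (by rw [hlabel0])
    · simpa using hlabel1 t
    · simpa using (flip _ _ (hpriv 1 t)).trans (by rw [hlabel1])
  have key : ∀ (t0 t1 : Fin 2 × Fin 2), (t0 = (0, 1) ∨ t0 = (1, 0)) →
      (t1 = (0, 0) ∨ t1 = (1, 1)) → ∀ d0 d1 : Fin 2,
      ∃ i s : Fin 2, rec i s t0 = d0 ∧ rec i s t1 = d1 := by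
    intro t0 t1 h0 h1 d0 d1
    simp only [hrec]
    rcases h0 with h0 | h0 <;> rcases h1 with h1 | h1 <;> subst h0 <;> subst h1 <;>
      fin_cases d0 <;> fin_cases d1 <;> decide
  set t0 : Fin 2 × Fin 2 := if r' 0 = 0 then (0, 1) else (1, 0) with ht0
  set t1 : Fin 2 × Fin 2 := if r' 1 = 0 then (0, 0) else (1, 1) with ht1
  have hX0 : (if r' 0 = 0 then X (0, 1) else X (1, 0)) = X t0 := by
    rw [ht0]; split <;> rfl
  have hX1 : (if r' 1 = 0 then X (0, 0) else X (1, 1)) = X t1 := by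
    rw [ht1]; split <;> rfl
  obtain ⟨i, s, h0, h1⟩ := key t0 t1 (by rw [ht0]; split <;> simp)
    (by rw [ht1]; split <;> simp) d.1 d.2
  obtain ⟨dec0', hdec0⟩ := hdec i s t0
  obtain ⟨dec1', hdec1⟩ := hdec i s t1
  refine ⟨i, s, fun p => dec0' (p.2, p.1), fun p => dec1' (p.2, p.1), fun a b => ?_⟩
  rw [hX0, hX1]
  exact ⟨by simpa [h0] using hdec0 a b, by simpa [h1] using hdec1 a b⟩
end

section
/- Let F be a field and t₁, t₂ ∈ F⁶. Suppose the cache {0,1,5} (subfiles A₀, A₁, B₂) recovers file B from (t₁,t₂), i.e., e₃, e₄, e₅ ∈ span({e₀, e₁, e₅} ∪ {t₁, t₂}), and suppose 𝒮 ⊆ {0,…,5} with |𝒮| = 3 is a cache that recovers file A from (t₁,t₂), i.e., e₀, e₁, e₂ ∈ span({e_s : s ∈ 𝒮} ∪ {t₁, t₂}). Then: (i) the coordinate 2 (subfile A₂) of both t₁ and t₂ is zero; (ii) the 2×2 matrix formed by coordinates 3 and 4 (subfiles B₀, B₁) of t₁ and t₂ is invertible; and (iii) 2 ∈ 𝒮,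 i.e., the second cache must store subfile A₂. -/
/-- The span of an uncoded cache (the standard basis vectors `e_s` for `s` in
the cache set `S ⊆ {0,…,5}`, coordinates corresponding to the six subfiles
`A₀, A₁, A₂, B₀, B₁, B₂`) together with the two transmitted packets `t1, t2`. -/
def cacheSpan (F : Type*) [Field F] (S : Finset (Fin 6)) (t1 t2 : Fin 6 → F) :
    Submodule F (Fin 6 → F) :=
  Submodule.span F ((fun s => (Pi.single s 1 : Fin 6 → F)) '' ↑S ∪ {t1, t2})

/-- The uncoded cache `S` recovers file `A` from the transmission `(t1, t2)`:
`e₀, e₁, e₂` all lie in the span of the cached subfiles and the packets. -/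
def recoversA6 (F : Type*) [Field F] (S : Finset (Fin 6)) (t1 t2 : Fin 6 → F) : Prop :=
  (Pi.single 0 1 : Fin 6 → F) ∈ cacheSpan F S t1 t2 ∧
  (Pi.single 1 1 : Fin 6 → F) ∈ cacheSpan F S t1 t2 ∧
  (Pi.single 2 1 : Fin 6 → F) ∈ cacheSpan F S t1 t2

/-- The uncoded cache `S` recovers file `B` from the transmission `(t1, t2)`:
`e₃, e₄, e₅` all lie in the span of the cached subfiles and the packets. -/
def recoversB6 (F : Type*) [Field F] (S : Finset (Fin 6)) (t1 t2 : Fin 6 → F) : Prop :=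
  (Pi.single 3 1 : Fin 6 → F) ∈ cacheSpan F S t1 t2 ∧
  (Pi.single 4 1 : Fin 6 → F) ∈ cacheSpan F S t1 t2 ∧
  (Pi.single 5 1 : Fin 6 → F) ∈ cacheSpan F S t1 t2

/-- If the cache `{0,1,5}` (subfiles `A₀, A₁, B₂`) recovers file `B` from the
transmission `(t1, t2)` and some cache `S` of three subfiles recovers file `A`
from the same transmission, then: (i) coordinate 2 (subfile `A₂`) of both
packets is zero; (ii) the 2×2 matrix formed by coordinates 3 and 4 (subfiles
`B₀, B₁`) of the packets is invertible; (iii) `2 ∈ S`, i.e. the second cache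
must store subfile `A₂`. -/
theorem other_cache_must_store_A2 (F : Type*) [Field F] (t1 t2 : Fin 6 → F)
    (h1 : recoversB6 F {0, 1, 5} t1 t2)
    (S : Finset (Fin 6)) (hcard : S.card = 3)
    (h2 : recoversA6 F S t1 t2) :
    (t1 2 = 0 ∧ t2 2 = 0) ∧
    IsUnit (!![t1 3, t1 4; t2 3, t2 4] : Matrix (Fin 2) (Fin 2) F) ∧
    2 ∈ S := by
  classical
  set π : (Fin 6 → F) →ₗ[F] (Fin 3 → F) :=
    LinearMap.pi (fun i => LinearMap.proj (![2, 3, 4] i)) with hπdef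
  have hle : cacheSpan F {0, 1, 5} t1 t2 ≤
      Submodule.comap π (Submodule.span F {π t1, π t2}) := by
    rw [cacheSpan]
    apply Submodule.span_le.mpr
    rintro x (⟨s, hs, rfl⟩ | hx)
    · have hz : π (Pi.single s 1 : Fin 6 → F) = 0 := by
        simp only [Finset.coe_insert, Set.mem_insert_iff, Finset.coe_singleton,
          Set.mem_singleton_iff] at hs
        funext i
        rcases hs with rfl | rfl | rfl <;> fin_cases i <;>
          simp [hπdef, Pi.single_apply]
      simp [Submodule.mem_comap, hz]
    · rcases hx with rfl | rfl
      · exact Submodule.subset_span (Or.inl rfl)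
      · exact Submodule.subset_span (Or.inr rfl)
  have h3 := hle h1.1
  have h4 := hle h1.2.1
  rw [Submodule.mem_comap, Submodule.mem_span_pair] at h3 h4
  obtain ⟨a, b, hab⟩ := h3
  obtain ⟨c, d, hcd⟩ := h4
  have e1 : a * t1 2 + b * t2 2 = 0 := by
    have := congr_fun hab 0; simpa [hπdef, Pi.single_apply] using this
  have e2 : a * t1 3 + b * t2 3 = 1 := by
    have := congr_fun hab 1; simpa [hπdef, Pi.single_apply] using this
  have e3 : a * t1 4 + b * t2 4 = 0 := by
    have := congr_fun hab 2; simpa [hπdef, Pi.single_apply] using this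
  have e4 : c * t1 2 + d * t2 2 = 0 := by
    have := congr_fun hcd 0; simpa [hπdef, Pi.single_apply] using this
  have e5 : c * t1 3 + d * t2 3 = 0 := by
    have := congr_fun hcd 1; simpa [hπdef, Pi.single_apply] using this
  have e6 : c * t1 4 + d * t2 4 = 1 := by
    have := congr_fun hcd 2; simpa [hπdef, Pi.single_apply] using this
  have hNM : (!![a, b; c, d] : Matrix (Fin 2) (Fin 2) F) *
      !![t1 3, t1 4; t2 3, t2 4] = 1 := by
    ext i j
    fin_cases i <;> fin_cases j <;>
      simp [Matrix.mul_apply, Fin.sum_univ_two, Matrix.one_apply] <;>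
      first
        | linear_combination e2
        | linear_combination e3
        | linear_combination e5
        | linear_combination e6
        | linear_combination e3 - e2
        | linear_combination e5 - e2
        | linear_combination e6 - e2
        | linear_combination e2 - e3
        | linear_combination e2 - e5
        | linear_combination e2 - e6
  have hM : IsUnit (!![t1 3, t1 4; t2 3, t2 4] : Matrix (Fin 2) (Fin 2) F) :=
    (Matrix.isUnit_iff_isUnit_det _).mpr (Matrix.isUnit_det_of_left_inverse hNM)
  have hdetN : a * d - b * c ≠ 0 := by
    have h := Matrix.isUnit_det_of_right_inverse hNM
    rw [Matrix.det_fin_two_of] at h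
    exact h.ne_zero
  have ht1 : t1 2 = 0 := by
    apply mul_left_cancel₀ hdetN
    rw [mul_zero]
    linear_combination d * e1 - b * e4
  have ht2 : t2 2 = 0 := by
    apply mul_left_cancel₀ hdetN
    rw [mul_zero]
    linear_combination a * e4 - c * e1
  refine ⟨⟨ht1, ht2⟩, hM, ?_⟩
  by_contra h2S
  have hle2 : cacheSpan F S t1 t2 ≤
      LinearMap.ker (LinearMap.proj 2 : (Fin 6 → F) →ₗ[F] F) := by
    rw [cacheSpan]
    apply Submodule.span_le.mpr
    rintro x (⟨s, hs, rfl⟩ | hx)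
    · have hs2 : s ≠ 2 := fun h => h2S (by rwa [h] at hs)
      simp [LinearMap.mem_ker, Pi.single_apply, Ne.symm hs2]
    · rcases hx with rfl | rfl
      · simpa [LinearMap.mem_ker] using ht1
      · simpa [LinearMap.mem_ker] using ht2
  have := hle2 h2.2.2
  simp [LinearMap.mem_ker] at this
end

section
/- For any field F, there do not exist transmission vectors t₁, t₂ ∈ F⁶ such that simultaneously the cache {0,1,5} (subfiles A₀, A₁, B₂) recovers file A from (t₁,t₂) — i.e., e₀, e₁, e₂ ∈ span({e₀, e₁, e₅} ∪ {t₁, t₂}) — and the cache {1,2,5} (subfiles A₁, A₂, B₂) recovers file B from (t₁,t₂) — i.e., e₃, e₄, e₅ ∈ span({e₁, e₂, e₅} ∪ {t₁, t₂}). (Hence if user 0's cache contains B₂, user 1's cache cannot also contain B₂.) -/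
/-- Auxiliary: membership in the span of five explicit vectors gives explicit
coefficients. -/
lemma mem_span5_coeffs {F : Type*} [Field F] {v a b c t u : Fin 6 → F}
    (h : v ∈ Submodule.span F ({a, b, c, t, u} : Set (Fin 6 → F))) :
    ∃ x1 x2 x3 x4 x5 : F, v = x1 • a + x2 • b + x3 • c + x4 • t + x5 • u := by
  rw [Submodule.mem_span_insert] at h
  obtain ⟨x1, z1, hz1, rfl⟩ := h
  rw [Submodule.mem_span_insert] at hz1
  obtain ⟨x2, z2, hz2, rfl⟩ := hz1
  rw [Submodule.mem_span_insert] at hz2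
  obtain ⟨x3, z3, hz3, rfl⟩ := hz2
  rw [Submodule.mem_span_pair] at hz3
  obtain ⟨x4, x5, rfl⟩ := hz3
  exact ⟨x1, x2, x3, x4, x5, by module⟩

/-- There is no transmission `(t1, t2)` from which the cache `{0,1,5}`
(subfiles `A₀, A₁, B₂`) recovers file `A` while the cache `{1,2,5}` (subfiles
`A₁, A₂, B₂`) recovers file `B`.  Hence if user 0's cache contains `B₂`,
user 1's cache cannot also contain `B₂`. -/
theorem no_shared_B2 (F : Type*) [Field F] :
    ¬ ∃ t1 t2 : Fin 6 → F,
        recoversA6 F {0, 1, 5} t1 t2 ∧ recoversB6 F {1, 2, 5} t1 t2 := by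
  rintro ⟨t1, t2, ⟨-, -, h2⟩, ⟨h3, h4, -⟩⟩
  have hs1 : ((fun s => (Pi.single s 1 : Fin 6 → F)) '' ↑({0,1,5} : Finset (Fin 6)) ∪ {t1, t2})
      = ({Pi.single 0 1, Pi.single 1 1, Pi.single 5 1, t1, t2} : Set (Fin 6 → F)) := by
    ext x
    simp only [Finset.coe_insert, Finset.coe_singleton, Set.image_insert_eq,
      Set.image_singleton, Set.mem_union, Set.mem_insert_iff, Set.mem_singleton_iff]
    tauto
  have hs2 : ((fun s => (Pi.single s 1 : Fin 6 → F)) '' ↑({1,2,5} : Finset (Fin 6)) ∪ {t1, t2})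
      = ({Pi.single 1 1, Pi.single 2 1, Pi.single 5 1, t1, t2} : Set (Fin 6 → F)) := by
    ext x
    simp only [Finset.coe_insert, Finset.coe_singleton, Set.image_insert_eq,
      Set.image_singleton, Set.mem_union, Set.mem_insert_iff, Set.mem_singleton_iff]
    tauto
  rw [cacheSpan, hs1] at h2
  rw [cacheSpan, hs2] at h3 h4
  obtain ⟨a, b, c, d, f, he2⟩ := mem_span5_coeffs h2
  obtain ⟨a', b', c', d', f', he3⟩ := mem_span5_coeffs h3
  obtain ⟨a'', b'', c'', d'', f'', he4⟩ := mem_span5_coeffs h4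
  -- evaluate at coordinates 2, 3, 4
  have e22 := congrFun he2 2
  have e23 := congrFun he2 3
  have e24 := congrFun he2 4
  have e33 := congrFun he3 3
  have e34 := congrFun he3 4
  have e43 := congrFun he4 3
  have e44 := congrFun he4 4
  simp only [Pi.add_apply, Pi.smul_apply, smul_eq_mul, Pi.single_apply,
    show ((2:Fin 6) = 0) = False by simp, show ((2:Fin 6) = 1) = False by simp,
    show ((2:Fin 6) = 5) = False by simp, show ((2:Fin 6) = 2) = True by simp,
    show ((3:Fin 6) = 0) = False by simp, show ((3:Fin 6) = 1) = False by simp,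
    show ((3:Fin 6) = 2) = False by simp, show ((3:Fin 6) = 5) = False by simp,
    show ((3:Fin 6) = 3) = True by simp, show ((3:Fin 6) = 4) = False by simp,
    show ((4:Fin 6) = 0) = False by simp, show ((4:Fin 6) = 1) = False by simp,
    show ((4:Fin 6) = 2) = False by simp, show ((4:Fin 6) = 5) = False by simp,
    show ((4:Fin 6) = 3) = False by simp, show ((4:Fin 6) = 4) = True by simp,
    if_true, if_false, zero_add, add_zero] at e22 e23 e24 e33 e34 e43 e44
  set p := t1 3; set q := t1 4; set r := t2 3; set s := t2 4
  have hD : (d' * f'' - f' * d'') * (p * s - q * r) = 1 := by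
    linear_combination (-(d'' * q + f'' * s)) * e33 - e44 + (d'' * p + f'' * r) * e34
  have hd : d * (p * s - q * r) = 0 := by linear_combination (-s) * e23 + r * e24
  have hf : f * (p * s - q * r) = 0 := by linear_combination (-p) * e24 + q * e23
  have hd0 : d = 0 := by linear_combination (d' * f'' - f' * d'') * hd - d * hD
  have hf0 : f = 0 := by linear_combination (d' * f'' - f' * d'') * hf - f * hD
  have : (1 : F) = 0 := by linear_combination e22 + t1 2 * hd0 + t2 2 * hf0
  exact one_ne_zero this
end

section
/- Let F be a field and let s₁, s₂ ∈ F⁶ (the two packets of transmission X^{BA}) and u₁, u₂ ∈ F⁶ (the two packets of transmission X^{AA}) satisfy: (H1) the cache {0,1,5} recovers file B from (s₁,s₂), i.e., e₃, e₄, e₅ ∈ span({e₀,e₁,e₅} ∪ {s₁,s₂}); (H2) the cache {2,3,4} recovers file A from (s₁,s₂), i.e., e₀, e₁, e₂ ∈ span({e₂,e₃,e₄} ∪ {s₁,s₂}); (H3) the cache {0,1,5} recovers file A from (u₁,u₂); and (H4) the cache {2,3,4} recovers file A from (u₁,u₂). Then there is no subset 𝒮 ⊆ {0,…,5} with |𝒮|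 = 3 such that the cache 𝒮 recovers file A from (s₁,s₂) and recovers file B from (u₁,u₂). (Hence demand privacy fails when user 0's cache is {A₀,A₁,B₂} and user 1's cache contains two subfiles of B.) -/
section Aux

variable {F : Type*} [Field F]

/-- If the span of a finset of at most 5 vectors in `F⁶` contains all six standard
basis vectors, we get a contradiction (dimension count). -/
lemma aux_card_le_five_not_top (T : Finset (Fin 6 → F)) (hcard : T.card ≤ 5)
    (h : ∀ k : Fin 6, (Pi.single k 1 : Fin 6 → F) ∈ Submodule.span F (T : Set (Fin 6 → F))) :
    False := by
  have htop : Submodule.span F (T : Set (Fin 6 → F)) = ⊤ := by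
    rw [eq_top_iff, ← (Pi.basisFun F (Fin 6)).span_eq]
    refine Submodule.span_le.mpr ?_
    rintro x ⟨i, rfl⟩
    simpa [Pi.basisFun_apply] using h i
  have h1 : (Set.finrank F (T : Set (Fin 6 → F))) ≤ T.card :=
    finrank_span_finset_le_card T
  have h2 : Module.finrank F (Fin 6 → F) = 6 := Module.finrank_fin_fun F
  rw [Set.finrank, htop, finrank_top] at h1
  omega

lemma mem_cacheSpan_single {S : Finset (Fin 6)} {s : Fin 6} (hs : s ∈ S)
    (t1 t2 : Fin 6 → F) : (Pi.single s 1 : Fin 6 → F) ∈ cacheSpan F S t1 t2 :=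
  Submodule.subset_span (Or.inl ⟨s, hs, rfl⟩)

lemma mem_cacheSpan_t1 (S : Finset (Fin 6)) (t1 t2 : Fin 6 → F) :
    t1 ∈ cacheSpan F S t1 t2 :=
  Submodule.subset_span (Or.inr (Or.inl rfl))

lemma mem_cacheSpan_t2 (S : Finset (Fin 6)) (t1 t2 : Fin 6 → F) :
    t2 ∈ cacheSpan F S t1 t2 :=
  Submodule.subset_span (Or.inr (Or.inr rfl))

/-- A cacheSpan with `|S| ≤ 3` cannot contain all six standard basis vectors. -/
lemma aux_cacheSpan_all (S : Finset (Fin 6)) (hS : S.card ≤ 3) (t1 t2 : Fin 6 → F)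
    (h : ∀ k : Fin 6, (Pi.single k 1 : Fin 6 → F) ∈ cacheSpan F S t1 t2) : False := by
  classical
  have hset : ((fun s => (Pi.single s 1 : Fin 6 → F)) '' ↑S ∪ {t1, t2})
      = ((S.image (fun s => (Pi.single s 1 : Fin 6 → F)) ∪ {t1, t2} : Finset (Fin 6 → F)) :
        Set (Fin 6 → F)) := by
    rw [Finset.coe_union, Finset.coe_image, Finset.coe_insert, Finset.coe_singleton]
  have hcard : (S.image (fun s => (Pi.single s 1 : Fin 6 → F)) ∪ {t1, t2}
      : Finset (Fin 6 → F)).card ≤ 5 := by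
    refine le_trans (Finset.card_union_le _ _) ?_
    have h1 : (S.image (fun s => (Pi.single s 1 : Fin 6 → F))).card ≤ 3 :=
      le_trans (Finset.card_image_le) hS
    have h2 : ({t1, t2} : Finset (Fin 6 → F)).card ≤ 2 :=
      le_trans (Finset.card_insert_le _ _) (by simp)
    omega
  refine aux_card_le_five_not_top _ hcard ?_
  intro k
  have := h k
  rwa [cacheSpan, hset] at this

/-- If all basis vectors except possibly `e j` lie in a cacheSpan with `|S| ≤ 3`,
then every element of the span has `j`-coordinate zero. -/
lemma aux_coord_zero (S : Finset (Fin 6)) (hS : S.card ≤ 3) (t1 t2 : Fin 6 → F) (j : Fin 6)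
    (h : ∀ k : Fin 6, k ≠ j → (Pi.single k 1 : Fin 6 → F) ∈ cacheSpan F S t1 t2)
    (t : Fin 6 → F) (ht : t ∈ cacheSpan F S t1 t2) : t j = 0 := by
  by_contra hne
  refine aux_cacheSpan_all S hS t1 t2 ?_
  intro k
  by_cases hk : k = j
  · subst hk
    have hsum : t = ∑ i : Fin 6, t i • (Pi.single i 1 : Fin 6 → F) := by
      have he : ∀ i : Fin 6, t i • (Pi.single i 1 : Fin 6 → F) = Pi.single i (t i) := by
        intro i
        rw [← Pi.single_smul, smul_eq_mul, mul_one]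
      simp_rw [he, Finset.univ_sum_single]
    have hsplit : ∑ i : Fin 6, t i • (Pi.single i 1 : Fin 6 → F)
        = t k • (Pi.single k 1 : Fin 6 → F)
          + ∑ i ∈ Finset.univ.erase k, t i • (Pi.single i 1 : Fin 6 → F) :=
      (Finset.add_sum_erase _ _ (Finset.mem_univ k)).symm
    have hmem : t k • (Pi.single k 1 : Fin 6 → F) ∈ cacheSpan F S t1 t2 := by
      have hrest : ∑ i ∈ Finset.univ.erase k, t i • (Pi.single i 1 : Fin 6 → F)
          ∈ cacheSpan F S t1 t2 := by
        refine Submodule.sum_mem _ ?_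
        intro i hi
        exact Submodule.smul_mem _ _ (h i (Finset.ne_of_mem_erase hi))
      have heq : t k • (Pi.single k 1 : Fin 6 → F)
          = t - ∑ i ∈ Finset.univ.erase k, t i • (Pi.single i 1 : Fin 6 → F) :=
        eq_sub_of_add_eq (hsum.trans hsplit).symm
      rw [heq]
      exact Submodule.sub_mem _ ht hrest
    have hfin := Submodule.smul_mem _ (t k)⁻¹ hmem
    rwa [smul_smul, inv_mul_cancel₀ hne, one_smul] at hfin
  · exact h k hk

/-- If both packets have `j`-coordinate zero and `e j` is in the cacheSpan, `j ∈ S`. -/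
lemma aux_mem_of_single_mem (S : Finset (Fin 6)) (t1 t2 : Fin 6 → F) (j : Fin 6)
    (h1 : t1 j = 0) (h2 : t2 j = 0)
    (hmem : (Pi.single j 1 : Fin 6 → F) ∈ cacheSpan F S t1 t2) : j ∈ S := by
  by_contra hj
  have hle : cacheSpan F S t1 t2 ≤ LinearMap.ker (LinearMap.proj j :
      (Fin 6 → F) →ₗ[F] F) := by
    refine Submodule.span_le.mpr ?_
    rintro x (⟨s, hs, rfl⟩ | rfl | rfl)
    · have hne : s ≠ j := fun h => hj (h ▸ hs)
      simp [LinearMap.mem_ker, Pi.single_eq_of_ne (Ne.symm hne)]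
    · simpa [LinearMap.mem_ker] using h1
    · simpa [LinearMap.mem_ker] using h2
  have := hle hmem
  simp [LinearMap.mem_ker] at this

end Aux

/-- Demand privacy fails when user 0's cache is `{A₀,A₁,B₂} = {0,1,5}` and user
1's cache `{A₂,B₀,B₁} = {2,3,4}` contains two subfiles of `B`.  If the
transmission `(s1,s2)` (for demand `(B,A)`) lets cache `{0,1,5}` recover `B` and
cache `{2,3,4}` recover `A`, and the transmission `(u1,u2)` (for demand `(A,A)`)
lets both caches `{0,1,5}` and `{2,3,4}` recover `A`, then no three-element
cache `S` can recover `A` from `(s1,s2)` and `B` from `(u1,u2)`. -/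
theorem no_privacy_two_B_subfiles (F : Type*) [Field F] (s1 s2 u1 u2 : Fin 6 → F)
    (H1 : recoversB6 F {0, 1, 5} s1 s2)
    (H2 : recoversA6 F {2, 3, 4} s1 s2)
    (H3 : recoversA6 F {0, 1, 5} u1 u2)
    (H4 : recoversA6 F {2, 3, 4} u1 u2) :
    ¬ ∃ S : Finset (Fin 6), S.card = 3 ∧
        recoversA6 F S s1 s2 ∧ recoversB6 F S u1 u2 := by
  rintro ⟨S, hcard, hA, hB⟩
  -- All `e k` with `k ≠ 2` are in the span of cache {0,1,5} and (s1,s2)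
  have hall2 : ∀ k : Fin 6, k ≠ 2 →
      (Pi.single k 1 : Fin 6 → F) ∈ cacheSpan F {0, 1, 5} s1 s2 := by
    intro k hk
    fin_cases k
    · exact mem_cacheSpan_single (by decide) s1 s2
    · exact mem_cacheSpan_single (by decide) s1 s2
    · exact absurd rfl hk
    · exact H1.1
    · exact H1.2.1
    · exact H1.2.2
  have hScard : ({0, 1, 5} : Finset (Fin 6)).card ≤ 3 := by decide
  -- hence s1, s2 have 2-coordinate zero
  have hs1 : s1 2 = 0 :=
    aux_coord_zero _ hScard s1 s2 2 hall2 s1 (mem_cacheSpan_t1 _ _ _)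
  have hs2 : s2 2 = 0 :=
    aux_coord_zero _ hScard s1 s2 2 hall2 s2 (mem_cacheSpan_t2 _ _ _)
  -- so 2 ∈ S (since S recovers A from (s1,s2), in particular e₂)
  have h2S : (2 : Fin 6) ∈ S := aux_mem_of_single_mem S s1 s2 2 hs1 hs2 hA.2.2
  -- Now look at U = cacheSpan F S u1 u2 : it contains all basis vectors
  refine aux_cacheSpan_all S (le_of_eq hcard) u1 u2 ?_
  -- span of cache {2,3,4} with (u1,u2) is contained in U
  have hle : cacheSpan F {2, 3, 4} u1 u2 ≤ cacheSpan F S u1 u2 := by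
    refine Submodule.span_le.mpr ?_
    rintro x (⟨s, hs, rfl⟩ | rfl | rfl)
    · simp only [Finset.coe_insert, Finset.coe_singleton, Set.mem_insert_iff,
        Set.mem_singleton_iff] at hs
      rcases hs with rfl | rfl | rfl
      · exact mem_cacheSpan_single h2S u1 u2
      · exact hB.1
      · exact hB.2.1
    · exact mem_cacheSpan_t1 _ _ _
    · exact mem_cacheSpan_t2 _ _ _
  intro k
  fin_cases k
  · exact hle H4.1
  · exact hle H4.2.1
  · exact mem_cacheSpan_single h2S u1 u2
  · exact hB.1
  · exact hB.2.1
  · exact hB.2.2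
end

section
/- Let F be a field and t₁, t₂ ∈ F⁶ (the two packets of transmission X^{AB}) satisfy: the cache {0,1,5} (subfiles A₀,A₁,B₂) recovers file A from (t₁,t₂), i.e., e₀, e₁, e₂ ∈ span({e₀,e₁,e₅} ∪ {t₁,t₂}); and the cache {1,2,3} (subfiles A₁,A₂,B₀) recovers file B from (t₁,t₂), i.e., e₃, e₄, e₅ ∈ span({e₁,e₂,e₃} ∪ {t₁,t₂}). Then: (i) the cache {1,2,4} (subfiles A₁,A₂,B₁) does NOT recover file A from (t₁,t₂); (ii) the cache {0,2,3} (subfiles A₀,A₂,B₀) does NOT recover file A from (t₁,t₂); (iii) the cache {0,1,4} (subfiles A₀,A₁,B₁) does NOT recover file B from (t₁,t₂); and (iv) the cache {0,2,5} (subfiles A₀,A₂,B₂) does NOT recover file B from (t₁,t₂). (Hence demand privacy is impossible for this cache configuration.) -/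
/-- Membership in the span of five vectors gives coefficients, pointwise. -/
lemma span5_coord {F : Type*} [Field F] {x a b c d e : Fin 6 → F}
    (h : x ∈ Submodule.span F ({a, b, c, d, e} : Set (Fin 6 → F))) :
    ∃ c1 c2 c3 c4 c5 : F, ∀ j, x j = c1 * a j + c2 * b j + c3 * c j + c4 * d j + c5 * e j := by
  rw [Submodule.mem_span_insert] at h
  obtain ⟨c1, z, hz, rfl⟩ := h
  rw [Submodule.mem_span_insert] at hz
  obtain ⟨c2, z, hz, rfl⟩ := hz
  rw [Submodule.mem_span_insert] at hz
  obtain ⟨c3, z, hz, rfl⟩ := hz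
  rw [Submodule.mem_span_insert] at hz
  obtain ⟨c4, z, hz, rfl⟩ := hz
  rw [Submodule.mem_span_singleton] at hz
  obtain ⟨c5, rfl⟩ := hz
  exact ⟨c1, c2, c3, c4, c5, fun j => by simp; ring⟩

/-- Demand privacy is impossible for the cache configuration where user 0 holds
`{A₀,A₁,B₂} = {0,1,5}` and user 1 holds `{A₁,A₂,B₀} = {1,2,3}`: if the
transmission `(t1,t2)` (for demand `(A,B)`) lets cache `{0,1,5}` recover file
`A` and cache `{1,2,3}` recover file `B`, then (i) cache `{1,2,4}` (subfiles
`A₁,A₂,B₁`) cannot recover `A`, (ii) cache `{0,2,3}` (subfiles `A₀,A₂,B₀`)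
cannot recover `A`, (iii) cache `{0,1,4}` (subfiles `A₀,A₁,B₁`) cannot recover
`B`, and (iv) cache `{0,2,5}` (subfiles `A₀,A₂,B₂`) cannot recover `B`. -/
theorem no_privacy_consistent_caches (F : Type*) [Field F] (t1 t2 : Fin 6 → F)
    (hA : recoversA6 F {0, 1, 5} t1 t2)
    (hB : recoversB6 F {1, 2, 3} t1 t2) :
    ¬ recoversA6 F {1, 2, 4} t1 t2 ∧
    ¬ recoversA6 F {0, 2, 3} t1 t2 ∧
    ¬ recoversB6 F {0, 1, 4} t1 t2 ∧
    ¬ recoversB6 F {0, 2, 5} t1 t2 := by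
  have hset : ∀ (i j k : Fin 6),
      ((fun s => (Pi.single s 1 : Fin 6 → F)) '' ↑({i, j, k} : Finset (Fin 6)) ∪ {t1, t2}
        : Set (Fin 6 → F)) = {Pi.single i 1, Pi.single j 1, Pi.single k 1, t1, t2} := by
    intro i j k
    simp only [Finset.coe_insert, Finset.coe_singleton, Set.image_insert_eq, Set.image_singleton,
      Set.insert_union, Set.singleton_union]
  obtain ⟨-, -, hA2⟩ := hA
  obtain ⟨-, hB4, hB5⟩ := hB
  simp only [cacheSpan] at hA2 hB4 hB5
  rw [hset 0 1 5] at hA2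
  rw [hset 1 2 3] at hB4 hB5
  obtain ⟨_, _, _, p, q, hP⟩ := span5_coord hA2
  have h1 := hP 2; have h2 := hP 3; have h3 := hP 4
  obtain ⟨_, _, _, r, s, hR⟩ := span5_coord hB4
  have h4 := hR 0; have h5 := hR 4; have h6 := hR 5
  obtain ⟨_, _, _, u, v, hU⟩ := span5_coord hB5
  have h7 := hU 0; have h8 := hU 4; have h9 := hU 5
  simp [Pi.single_apply] at h1 h2 h3 h4 h5 h6 h7 h8 h9
  have hdet : (r*v - s*u) * (t1 4 * t2 5 - t1 5 * t2 4) = 1 := by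
    linear_combination (-(u*t1 5 + v*t2 5)) * h5 - h9 + (u*t1 4 + v*t2 4) * h6
  refine ⟨?_, ?_, ?_, ?_⟩
  · -- (i) cache {1,2,4} cannot recover A
    rintro ⟨hC0, -, -⟩
    simp only [cacheSpan] at hC0
    rw [hset 1 2 4] at hC0
    obtain ⟨_, _, _, g, h', hG⟩ := span5_coord hC0
    have h10 := hG 0
    simp [Pi.single_apply] at h10
    have ht10 : (r*v - s*u) * t1 0 = 0 := by linear_combination (-v) * h4 + s * h7
    have ht20 : (r*v - s*u) * t2 0 = 0 := by linear_combination u * h4 + (-r) * h7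
    have hz : r*v - s*u = 0 := by
      linear_combination (r*v - s*u) * h10 + g * ht10 + h' * ht20
    exact one_ne_zero (α := F)
      (by linear_combination (t1 4 * t2 5 - t1 5 * t2 4) * hz - hdet)
  · -- (ii) cache {0,2,3} cannot recover A
    rintro ⟨-, hC1, -⟩
    simp only [cacheSpan] at hC1
    rw [hset 0 2 3] at hC1
    obtain ⟨_, _, _, g, h', hG⟩ := span5_coord hC1
    have k1 := hG 1; have k4 := hG 4; have k5 := hG 5
    simp [Pi.single_apply] at k1 k4 k5
    have hg : g * (t1 4 * t2 5 - t1 5 * t2 4) = 0 := by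
      linear_combination (-t2 5) * k4 + t2 4 * k5
    have hh : h' * (t1 4 * t2 5 - t1 5 * t2 4) = 0 := by
      linear_combination t1 5 * k4 + (-(t1 4)) * k5
    have hM : t1 4 * t2 5 - t1 5 * t2 4 = 0 := by
      linear_combination (t1 4 * t2 5 - t1 5 * t2 4) * k1 + t1 1 * hg + t2 1 * hh
    exact one_ne_zero (α := F) (by linear_combination (r*v - s*u) * hM - hdet)
  · -- (iii) cache {0,1,4} cannot recover B
    rintro ⟨hC3, -, hC5⟩
    simp only [cacheSpan] at hC3 hC5
    rw [hset 0 1 4] at hC3 hC5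
    obtain ⟨_, _, _, g, h', hG⟩ := span5_coord hC3
    obtain ⟨_, _, _, k, l, hK⟩ := span5_coord hC5
    have m2 := hG 2; have m3 := hG 3; have m5 := hG 5
    have n2 := hK 2; have n3 := hK 3; have n5 := hK 5
    simp [Pi.single_apply] at m2 m3 m5 n2 n3 n5
    have hdetP : (g*l - h'*k) * (t1 3 * t2 5 - t1 5 * t2 3) = 1 := by
      linear_combination (-(k*t1 5 + l*t2 5)) * m3 - n5 + (k*t1 3 + l*t2 3) * m5
    have ht12 : (g*l - h'*k) * t1 2 = 0 := by linear_combination (-l) * m2 + h' * n2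
    have ht22 : (g*l - h'*k) * t2 2 = 0 := by linear_combination k * m2 + (-g) * n2
    have hz : g*l - h'*k = 0 := by
      linear_combination (g*l - h'*k) * h1 + p * ht12 + q * ht22
    exact one_ne_zero (α := F)
      (by linear_combination (t1 3 * t2 5 - t1 5 * t2 3) * hz - hdetP)
  · -- (iv) cache {0,2,5} cannot recover B
    rintro ⟨hC3, hC4, -⟩
    simp only [cacheSpan] at hC3 hC4
    rw [hset 0 2 5] at hC3 hC4
    obtain ⟨_, _, _, g, h', hG⟩ := span5_coord hC3
    obtain ⟨_, _, _, k, l, hK⟩ := span5_coord hC4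
    have m3 := hG 3; have m4 := hG 4
    have n3 := hK 3; have n4 := hK 4
    simp [Pi.single_apply] at m3 m4 n3 n4
    have hdetQ : (g*l - h'*k) * (t1 3 * t2 4 - t1 4 * t2 3) = 1 := by
      linear_combination (-(k*t1 4 + l*t2 4)) * m3 - n4 + (k*t1 3 + l*t2 3) * m4
    have hp : p * (t1 3 * t2 4 - t1 4 * t2 3) = 0 := by
      linear_combination (-t2 4) * h2 + t2 3 * h3
    have hq : q * (t1 3 * t2 4 - t1 4 * t2 3) = 0 := by
      linear_combination t1 4 * h2 + (-(t1 3)) * h3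
    have hC : t1 3 * t2 4 - t1 4 * t2 3 = 0 := by
      linear_combination (t1 3 * t2 4 - t1 4 * t2 3) * h1 + t1 2 * hp + t2 2 * hq
    exact one_ne_zero (α := F) (by linear_combination (g*l - h'*k) * hC - hdetQ)
end

section
/- (Construction of a demand-private (K,N) scheme from a non-private (NK,N) scheme.) Let N, K ≥ 1 and suppose given a correct non-private coded caching scheme for N·K users and N files as in the context. Then for all demand and randomness vectors d, r : Fin K → ZMod N, defining the extended demand vector D'(k,j) := d(k) − r(k) + j (arithmetic in ZMod N): (a) for every k ∈ Fin K and every library w : ZMod N → V, dec((k, r(k)), D', cache((k, r(k)), w), enc(D', w)) = w(d(k)), i.e., each user of the private scheme recovers its demanded file using the cache of virtual user (k, r(k)) and the non-private transmission for D'; and (b) for every k ∈ Fin K and every file index v ∈ ZMod N, there is exactly one ρ ∈ ZMod N such that v − ρ + j = D'(k,j) for all j ∈ ZMod N (so every possible demand of user k is consistent with the broadcast D' under exactly one cache option, which is the privacy mechanism). -/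
/-- Construction of a demand-private `(K,N)` scheme from a non-private `(NK,N)`
scheme.  The non-private scheme has `N·K` users indexed by `Fin K × ZMod N` and
`N` files indexed by `ZMod N` (file contents in `V`, a library being
`w : ZMod N → V`), with placement `cache`, encoder `enc` and decoders `dec`
satisfying correctness (`hcorrect`).

For real demands `d` and private randomness `r` (both `Fin K → ZMod N`), the
extended demand vector is `D' (k,j) = d k − r k + j`.  Then:

(a) every real user `k`, using the cache of virtual user `(k, r k)` and the
non-private transmission for `D'`, recovers its demanded file `w (d k)`; and

(b) for every user `k` and every file index `v`, there is exactly one cache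
option `ρ ∈ ZMod N` under which the demand `v` is consistent with the broadcast
`D'` (i.e. `v − ρ + j = D' (k,j)` for all `j`) — the privacy mechanism. -/
theorem private_from_nonprivate (N K : ℕ) (hN : 1 ≤ N) (hK : 1 ≤ K)
    (V C X : Type*)
    (cache : Fin K × ZMod N → (ZMod N → V) → C)
    (enc : ((Fin K × ZMod N) → ZMod N) → (ZMod N → V) → X)
    (dec : (Fin K × ZMod N) → ((Fin K × ZMod N) → ZMod N) → C → X → V)
    (hcorrect : ∀ (u : Fin K × ZMod N) (D' : (Fin K × ZMod N) → ZMod N)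
      (w : ZMod N → V), dec u D' (cache u w) (enc D' w) = w (D' u)) :
    ∀ d r : Fin K → ZMod N,
      (∀ (k : Fin K) (w : ZMod N → V),
        dec (k, r k) (fun p => d p.1 - r p.1 + p.2)
          (cache (k, r k) w) (enc (fun p => d p.1 - r p.1 + p.2) w) = w (d k)) ∧
      (∀ (k : Fin K) (v : ZMod N),
        ∃! ρ : ZMod N, ∀ j : ZMod N, v - ρ + j = d k - r k + j) := by
  intro d r
  constructor
  · intro k w
    rw [hcorrect (k, r k) (fun p => d p.1 - r p.1 + p.2) w]
    simp
  · intro k v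
    refine ⟨v - d k + r k, fun j => by ring, fun ρ h => ?_⟩
    have := h 0
    linear_combination -this
end

section
/- (Demand-private scheme from a placement delivery array.) Let F_P : P be an f × (N·K) array with entries in Option(Fin S), columns indexed by pairs (k,j) ∈ Fin K × ZMod N, satisfying the PDA condition of the context, let V be an abelian group, and let W : ZMod N → Fin f → V be any library of N files of f subfiles each. Define the cache of column u to be the family of all subfiles W(i)(j) with i ∈ ZMod N and P(j,u) = none, and for an extended demand D' : (Fin K × ZMod N) → ZMod N define the transmission components X_s := Σ_{(j,u) : P(j,u) = some s} W(D'(u))(j) for s ∈ Fin S. Then for all d, r : Fin K → ZMod N, with D'(k,j) := d(k) − r(k) + j, every user k ∈ Fin K recovers its demanded file from the cache of column (k, r(k)) and the transmission: there is a decoding function dec (depending on k, r, d and P but not on W) such that dec(cache of column (k,r(k)) evaluated at W, (X_s)_{s ∈ Fin S}) = W(d(k)) for every library W. (This is the delivery scheme underlying the private (K, N; NZ/f, S/f) scheme obtained from an (NK, f, Z, S) PDA.) -/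
/-- Demand-private scheme from a placement delivery array.  `P` is an
`f × (N·K)` array with entries in `Option (Fin S)` whose columns are indexed by
the virtual users `(k,j) ∈ Fin K × ZMod N`, satisfying the PDA condition
(`hPDA`): equal symbols in distinct cells occur in distinct rows and columns,
and the two "crossing" cells are `none`.

Each of the `N` files (library `W : ZMod N → Fin f → V`, `V` an abelian group)
is split into `f` subfiles.  The cache of column `u` is the family of all
subfiles `W i j` with `P j u = none`, and for an extended demand `D'` the
transmission component for symbol `s` is `Σ_{(j,u) : P j u = some s} W (D' u) j`.

For real demands `d` and private randomness `r` and the extended demand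
`D' (k,j) = d k − r k + j`, every real user `k` recovers its demanded file
`W (d k)` from the cache of column `(k, r k)` and the transmission, via a
decoder depending on `k, r, d, P` but not on the library `W`. -/
theorem private_scheme_from_PDA (N K f S : ℕ) [NeZero N]
    (P : Fin f → (Fin K × ZMod N) → Option (Fin S))
    (hPDA : ∀ (j1 j2 : Fin f) (u1 u2 : Fin K × ZMod N) (s : Fin S),
      P j1 u1 = some s → P j2 u2 = some s → (j1, u1) ≠ (j2, u2) →
      j1 ≠ j2 ∧ u1 ≠ u2 ∧ P j1 u2 = none ∧ P j2 u1 = none)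
    (V : Type*) [AddCommGroup V]
    (d r : Fin K → ZMod N) (k : Fin K) :
    ∃ dec : (ZMod N → Fin f → Option V) → (Fin S → V) → (Fin f → V),
      ∀ W : ZMod N → Fin f → V,
        dec
          (fun i j => if P j (k, r k) = none then some (W i j) else none)
          (fun s => ∑ p : Fin f × (Fin K × ZMod N),
            if P p.1 p.2 = some s then W (d p.2.1 - r p.2.1 + p.2.2) p.1 else 0)
        = W (d k) := by
  classical
  refine ⟨fun C X j =>
    (P j (k, r k)).elim ((C (d k) j).getD 0) (fun s =>
      X s - ∑ p : Fin f × (Fin K × ZMod N),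
        if p ≠ (j, (k, r k)) ∧ P p.1 p.2 = some s
        then (C (d p.2.1 - r p.2.1 + p.2.2) p.1).getD 0 else 0), ?_⟩
  intro W
  funext j
  rcases h : P j (k, r k) with _ | s
  · simp [h]
  · simp only [h, Option.elim]
    have key : ∀ p : Fin f × (Fin K × ZMod N),
        (if p ≠ (j, (k, r k)) ∧ P p.1 p.2 = some s
          then ((if P p.1 (k, r k) = none
            then some (W (d p.2.1 - r p.2.1 + p.2.2) p.1) else none).getD 0) else 0)
        = (if P p.1 p.2 = some s then W (d p.2.1 - r p.2.1 + p.2.2) p.1 else 0)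
          - (if p = (j, (k, r k)) then W (d k) j else 0) := by
      intro p
      by_cases hp : p = (j, (k, r k))
      · subst hp
        simp [h, sub_add_cancel]
      · by_cases hs : P p.1 p.2 = some s
        · have hnone := (hPDA p.1 j p.2 (k, r k) s hs h (by
            intro hc
            exact hp (by rw [Prod.ext_iff] at hc ⊢; exact ⟨hc.1, hc.2⟩))).2.2.1
          simp [hp, hs, hnone]
        · simp [hp, hs]
    simp only [key, Finset.sum_sub_distrib]
    rw [Finset.sum_ite_eq' Finset.univ ((j, (k, r k)) : Fin f × (Fin K × ZMod N))
      (fun _ => W (d k) j)]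
    simp
end
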